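/- arXiv:1903.09968 — 3 statements merged into one kernel-verified Lean document; each statement's English description precedes it below -/
import Mathlib

section
/- Let p be a prime and r ≥ 1 an integer, and set q = p^r. In the monoid algebra ℕ[ZMod (q−1)] (AddMonoidAlgebra ℕ (ZMod (q−1))) the following identity holds: Π_{i=0}^{r−1} ( Σ_{j=0}^{p−1} [j·p^i] ) = [0] + Σ_{a ∈ ZMod (q−1)} [a], where [a] denotes the element AddMonoidAlgebra.single a 1 and j·p^i is reduced modulo q−1. -/
lemma sum_range_mul_aux {M : Type*} [AddCommMonoid M] (a b : ℕ) (f : ℕ → M) :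
    ∑ m ∈ Finset.range (a * b), f m =
      ∑ j ∈ Finset.range b, ∑ n ∈ Finset.range a, f (j * a + n) := by
  induction b with
  | zero => simp
  | succ b ih =>
      rw [Nat.mul_succ, Finset.sum_range_add, ih, Finset.sum_range_succ, mul_comm a b]

lemma digits_prod_aux (p r : ℕ) :
    (∏ i ∈ Finset.range r, ∑ j ∈ Finset.range p,
        (AddMonoidAlgebra.single (j * p ^ i) 1 : AddMonoidAlgebra ℕ ℕ)) =
      ∑ n ∈ Finset.range (p ^ r), (AddMonoidAlgebra.single n 1 : AddMonoidAlgebra ℕ ℕ) := by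
  induction r with
  | zero => simp [AddMonoidAlgebra.one_def]
  | succ r ih =>
      rw [Finset.prod_range_succ, ih, pow_succ,
        sum_range_mul_aux (p ^ r) p, Finset.sum_mul_sum, Finset.sum_comm]
      refine Finset.sum_congr rfl fun j _ => Finset.sum_congr rfl fun n _ => ?_
      rw [AddMonoidAlgebra.single_mul_single, one_mul, add_comm]

/-- In the monoid algebra `ℕ[ZMod (q-1)]`, `q = p^r` with `p` prime and `r ≥ 1`, one has
`Π_{i<r} (Σ_{j<p} [j p^i]) = [0] + Σ_{a} [a]`. -/
theorem exponential_of_special_character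
    (p r : ℕ) (hp : p.Prime) (hr : 1 ≤ r) [NeZero (p ^ r - 1)] :
    (∏ i ∈ Finset.range r,
        ∑ j ∈ Finset.range p,
          AddMonoidAlgebra.single ((j * p ^ i : ℕ) : ZMod (p ^ r - 1)) (1 : ℕ)) =
      AddMonoidAlgebra.single (0 : ZMod (p ^ r - 1)) (1 : ℕ) +
        ∑ a : ZMod (p ^ r - 1), AddMonoidAlgebra.single a (1 : ℕ) := by
  set m := p ^ r - 1 with hm
  have hq : 1 ≤ p ^ r := Nat.one_le_pow _ _ hp.pos
  have key := congrArg (AddMonoidAlgebra.mapDomainRingHom ℕ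
    (Nat.castAddMonoidHom (ZMod m))) (digits_prod_aux p r)
  simp only [map_prod, map_sum, AddMonoidAlgebra.mapDomainRingHom_apply,
    AddMonoidHom.toFun_eq_coe, ZeroHom.toFun_eq_coe,
    Finsupp.mapDomain.addMonoidHom, AddMonoidHom.coe_mk, ZeroHom.coe_mk,
    Finsupp.mapDomain_single, AddMonoidAlgebra.mapDomain_single, Nat.coe_castAddMonoidHom] at key
  have hrange : Finset.range (p ^ r) = insert m (Finset.range m) := by
    rw [show p ^ r = m + 1 from (Nat.succ_pred_eq_of_pos hq).symm, Finset.range_add_one]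
  rw [key, hrange, Finset.sum_insert Finset.notMem_range_self, ZMod.natCast_self]
  congr 1
  refine Finset.sum_nbij' (fun n => (n : ZMod m)) (fun a => a.val) ?_ ?_ ?_ ?_ ?_
  · intro n _; exact Finset.mem_univ _
  · intro a _; exact Finset.mem_range.2 (ZMod.val_lt a)
  · intro n hn; exact ZMod.val_cast_of_lt (Finset.mem_range.1 hn)
  · intro a _; exact ZMod.natCast_rightInverse a
  · intro n _; rfl
end

section
/- Let k be a field, Γ an additive commutative group, and A a commutative Γ-graded k-algebra which is finite-dimensional over k. Let ε : A → k be a k-algebra homomorphism whose kernel I is a nilpotent ideal and is homogeneous. Let M be an A-module which is free of finite rank d over A, equipped with a Γ-grading ℳ making it a Γ-graded module over A. Then M admits an A-basis consisting of homogeneous elements: there exist a basis b : Fin d → M of M as an A-module and degrees g : Fin d → Γ such that b(i) ∈ ℳ(g(i)) for every i. Equivalently, M is isomorphic as a graded A-module to a direct sum ⊕_{γ} A(γ)^{d_γ} of degree-shifted copies of A with Σ_γ d_γ = d. -/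
/-- Let `A` be a commutative `Γ`-graded finite-dimensional algebra over a field `k`, with an
algebra homomorphism `ε : A →ₐ[k] k` whose kernel is nilpotent and homogeneous.  Every
`Γ`-graded `A`-module which is free of finite rank `d` over `A` admits a homogeneous
`A`-basis. -/
theorem graded_free_module_has_homogeneous_basis
    {k A M Γ : Type*} [Field k] [AddCommGroup Γ] [DecidableEq Γ]
    [CommRing A] [Algebra k A] [FiniteDimensional k A]
    (𝒜 : Γ → Submodule k A) [GradedAlgebra 𝒜]
    (ε : A →ₐ[k] k)
    (hnil : IsNilpotent (RingHom.ker (ε : A →+* k)))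
    (hhom : (RingHom.ker (ε : A →+* k)).IsHomogeneous 𝒜)
    [AddCommGroup M] [Module k M] [Module A M] [IsScalarTower k A M]
    (d : ℕ) (B : Module.Basis (Fin d) A M)
    (ℳ : Γ → Submodule k M)
    (hint : DirectSum.IsInternal ℳ)
    (hsmul : ∀ (γ γ' : Γ) (a : A) (m : M), a ∈ 𝒜 γ → m ∈ ℳ γ' → a • m ∈ ℳ (γ + γ')) :
    ∃ (b : Module.Basis (Fin d) A M) (g : Fin d → Γ), ∀ i, b i ∈ ℳ (g i) := by
  classical
  obtain ⟨n, hn⟩ := hnil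
  set I : Ideal A := RingHom.ker (ε : A →+* k) with hI
  have finAM : Module.Finite A M := Module.Finite.of_basis B
  have finkM : Module.Finite k M := Module.Finite.trans A M
  set p : Submodule A M := I • (⊤ : Submodule A M) with hp
  -- Nakayama-type lemma for the nilpotent ideal `I`.
  have nak : ∀ N : Submodule A M, (⊤ : Submodule A M) ≤ N ⊔ I • ⊤ → N = ⊤ := by
    intro N hN
    have key : ∀ j : ℕ, (⊤ : Submodule A M) ≤ N ⊔ I ^ j • ⊤ := by
      intro j
      induction j with
      | zero => simpa [Submodule.top_smul] using le_sup_right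
      | succ j ih =>
        refine ih.trans (sup_le le_sup_left ?_)
        have h1 : I ^ j • (⊤ : Submodule A M) ≤ I ^ j • (N ⊔ I • ⊤) :=
          Submodule.smul_mono le_rfl hN
        refine h1.trans ?_
        rw [Submodule.smul_sup]
        refine sup_le (Submodule.smul_le_right.trans le_sup_left) ?_
        have h2 : I ^ j • (I • (⊤ : Submodule A M)) = I ^ (j + 1) • ⊤ := by
          rw [← Submodule.smul_assoc, smul_eq_mul, ← pow_succ]
        rw [h2]
        exact le_sup_right
    have := key n
    rw [hn] at this
    rw [← top_le_iff]
    simpa using this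
  -- the quotient `M ⧸ I•M`
  let q : M →ₗ[A] M ⧸ p := p.mkQ
  have hq : Function.Surjective q := Submodule.mkQ_surjective p
  let qk : M →ₗ[k] M ⧸ p := q.restrictScalars k
  have hqk : Function.Surjective qk := hq
  -- the `A`-action on the quotient is through `ε`
  have hker : ∀ a : A, a ∈ I → ∀ x : M ⧸ p, a • x = 0 := by
    intro a ha x
    obtain ⟨m, rfl⟩ := hq x
    show q (a • m) = 0
    rw [← LinearMap.mem_ker, Submodule.ker_mkQ]
    exact Submodule.smul_mem_smul ha Submodule.mem_top
  have hsc : ∀ (a : A) (x : M ⧸ p), a • x = ε a • x := by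
    intro a x
    have ha : a - algebraMap k A (ε a) ∈ I := by
      simp [hI, RingHom.mem_ker, map_sub]
    have h0 := hker _ ha x
    rw [sub_smul, sub_eq_zero] at h0
    rw [h0, algebraMap_smul]
  -- `A`-spans and `k`-spans agree in the quotient
  have spanAk : ∀ (s : Set (M ⧸ p)) (x : M ⧸ p),
      x ∈ Submodule.span A s → x ∈ Submodule.span k s := by
    intro s x hx
    induction hx using Submodule.span_induction with
    | mem y hy => exact Submodule.subset_span hy
    | zero => exact zero_mem _
    | add y z _ _ hy hz => exact add_mem hy hz
    | smul a y _ hy => rw [hsc a y]; exact Submodule.smul_mem _ _ hy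
  -- the images of `B` span the quotient over `k`
  have htopA : Submodule.span A (Set.range (⇑q ∘ ⇑B)) = ⊤ := by
    rw [Set.range_comp, Submodule.span_image, B.span_eq, Submodule.map_top,
      LinearMap.range_eq_top.mpr hq]
  have htop : Submodule.span k (Set.range (⇑qk ∘ ⇑B)) = ⊤ := by
    rw [eq_top_iff]
    intro x _
    exact spanAk _ x (htopA ▸ Submodule.mem_top)
  have finQ : FiniteDimensional k (M ⧸ p) := Module.Finite.of_surjective qk hqk
  have hfr : Module.finrank k (M ⧸ p) ≤ d := by simpa using finrank_le_of_span_eq_top htop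
  -- the homogeneous spanning set
  set s : Set (M ⧸ p) := ⋃ γ : Γ, ⇑qk '' (ℳ γ) with hs
  have hspans : Submodule.span k s = ⊤ := by
    rw [eq_top_iff]
    rintro x -
    obtain ⟨m, rfl⟩ := hqk x
    have hm : m ∈ Submodule.span k (⋃ γ : Γ, (ℳ γ : Set M)) := by
      rw [← Submodule.iSup_eq_span, hint.submodule_iSup_eq_top]
      exact Submodule.mem_top
    have := Submodule.mem_map_of_mem (f := qk) hm
    rw [Submodule.map_span, Set.image_iUnion] at this
    exact this
  obtain ⟨b, hbs, hbspan, hbind⟩ := exists_linearIndependent k s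
  rw [hspans] at hbspan
  have hbfin : b.Finite := hbind.setFinite
  haveI := hbfin.fintype
  let bb : Module.Basis b k (M ⧸ p) := Module.Basis.mk hbind (by rw [Subtype.range_coe, hbspan])
  have hcard : Fintype.card b = Module.finrank k (M ⧸ p) :=
    (Module.finrank_eq_card_basis bb).symm
  have hcd : Fintype.card b ≤ d := hcard.trans_le hfr
  -- choose homogeneous lifts of the elements of `b`
  have hlift : ∀ x : b, ∃ (γ : Γ) (m : M), m ∈ ℳ γ ∧ qk m = (x : M ⧸ p) := by
    rintro ⟨x, hx⟩
    obtain ⟨_, ⟨γ, rfl⟩, m, hm, rfl⟩ := hbs hx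
    exact ⟨γ, m, hm, rfl⟩
  choose γf mf hmf hqmf using hlift
  let e : Fin (Fintype.card b) ≃ b := (Fintype.equivFin b).symm
  set mm : Fin d → M := fun i =>
    if h : (i : ℕ) < Fintype.card b then mf (e ⟨i, h⟩) else 0 with hmm
  set g : Fin d → Γ := fun i =>
    if h : (i : ℕ) < Fintype.card b then γf (e ⟨i, h⟩) else 0 with hg
  have hmg : ∀ i, mm i ∈ ℳ (g i) := by
    intro i
    by_cases h : (i : ℕ) < Fintype.card b
    · simp only [hmm, hg, dif_pos h]; exact hmf _
    · simp only [hmm, hg, dif_neg h]; exact zero_mem _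
  -- the lifts generate `M` over `A`
  set N : Submodule A M := Submodule.span A (Set.range mm) with hN
  have hNtop : N = ⊤ := by
    refine nak N ?_
    intro x _
    have hx : q x ∈ Submodule.span k b := by rw [hbspan]; exact Submodule.mem_top
    have hble : (b : Set (M ⧸ p)) ⊆ ((N.restrictScalars k).map qk : Set (M ⧸ p)) := by
      intro y hy
      refine ⟨mf ⟨y, hy⟩, ?_, hqmf ⟨y, hy⟩⟩
      have hidx : mm ⟨(e.symm ⟨y, hy⟩ : ℕ), lt_of_lt_of_le (e.symm ⟨y, hy⟩).2 hcd⟩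
          = mf ⟨y, hy⟩ := by
        have h2 : ((⟨(e.symm ⟨y, hy⟩ : ℕ), lt_of_lt_of_le (e.symm ⟨y, hy⟩).2 hcd⟩ : Fin d) : ℕ)
            < Fintype.card b := (e.symm ⟨y, hy⟩).2
        simp only [hmm, dif_pos h2]
        congr 1
        exact Equiv.apply_symm_apply e ⟨y, hy⟩
      rw [← hidx]
      exact Submodule.subset_span (Set.mem_range_self _)
    have hx2 : q x ∈ (N.restrictScalars k).map qk :=
      (Submodule.span_le.mpr hble) hx
    obtain ⟨y, hyN, hyx⟩ := hx2
    have hxy : x - y ∈ p := by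
      rw [← Submodule.ker_mkQ p]
      show q (x - y) = 0
      rw [map_sub]
      exact sub_eq_zero.mpr hyx.symm
    have : x = y + (x - y) := by abel
    rw [this]
    exact Submodule.add_mem _ (Submodule.mem_sup_left hyN) (Submodule.mem_sup_right hxy)
  -- the resulting map `A^d → M` is bijective
  let f : (Fin d → A) →ₗ[A] M := Fintype.linearCombination A mm
  have hfsur : Function.Surjective f := by
    rw [← LinearMap.range_eq_top, Fintype.range_linearCombination, ← hN, hNtop]
  let φ : M →ₗ[A] M := f ∘ₗ (B.equivFun : M ≃ₗ[A] (Fin d → A)).toLinearMap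
  have hφsur : Function.Surjective φ := hfsur.comp B.equivFun.surjective
  have hφinj : Function.Injective φ :=
    OrzechProperty.injective_of_surjective_endomorphism φ hφsur
  have hfinj : Function.Injective f := by
    have h : ⇑f = ⇑φ ∘ ⇑B.equivFun.symm := by
      funext v
      show f v = f (B.equivFun (B.equivFun.symm v))
      rw [LinearEquiv.apply_symm_apply]
    rw [h]
    exact hφinj.comp B.equivFun.symm.injective
  let eM : (Fin d → A) ≃ₗ[A] M := LinearEquiv.ofBijective f ⟨hfinj, hfsur⟩
  refine ⟨(Pi.basisFun A (Fin d)).map eM, g, fun i => ?_⟩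
  have : ((Pi.basisFun A (Fin d)).map eM) i = mm i := by
    simp only [Module.Basis.map_apply, Pi.basisFun_apply]
    show Fintype.linearCombination A mm (Pi.single i 1) = mm i
    rw [Fintype.linearCombination_apply_single, one_smul]
  rw [this]
  exact hmg i
end

section
/- Let k be a field, Γ an additive commutative group, n ≥ 0 and N ≥ 2 integers, w : Fin n → Γ a weight function, and a : Fin n → Fin n → k a matrix such that a(i,j) = 0 whenever w(j) ≠ N • w(i). Let Q = k[X_1,…,X_n]/I where I is the ideal generated by the elements X_i^N − Σ_j a(i,j)·X_j. For γ ∈ Γ let Q_γ ⊆ Q be the k-linear span of the images of all monomials Π_i X_i^{e(i)} with e : Fin n → ℕ satisfying Σ_i e(i) • w(i) = γ. Then for every γ ∈ Γ, dim_k Q_γ equals the number of functions e : Fin n → {0,1,…,N−1} with Σ_i e(i) • w(i) = γ, and Q is the internal direct sum of the subspaces Q_γ. -/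
open scoped Classical

namespace GQD
variable {k : Type*} [Field k]

def step {n : ℕ} (N : ℕ) (e : Fin n → ℕ) (i j : Fin n) : Fin n → ℕ :=
  fun l => (if l = i then e l - N else e l) + (if l = j then 1 else 0)

lemma step_apply {n N : ℕ} (f : Fin n → ℕ) (i j l : Fin n) :
    step N f i j l = (if l = i then f l - N else f l) + (if l = j then 1 else 0) := rfl

lemma sum_step {n N : ℕ} (e : Fin n → ℕ) (i j : Fin n) (h : N ≤ e i) :
    ∑ l, step N e i j l = ∑ l, e l + 1 - N := by
  unfold step
  rw [Finset.sum_add_distrib]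
  have h2 : ∑ l : Fin n, (if l = j then 1 else 0) = 1 := by simp
  have h1 : ∑ l : Fin n, (if l = i then e l - N else e l) = ∑ l, e l - N := by
    have heq : (fun l : Fin n => if l = i then e l - N else e l)
        = Function.update e i (e i - N) := by
      funext l
      by_cases hl : l = i <;> simp [Function.update, hl]
    rw [heq, Finset.sum_update_of_mem (Finset.mem_univ i)]
    have := Finset.sum_eq_add_sum_sdiff_singleton_of_mem (Finset.mem_univ i) e
    omega
  have hle : N ≤ ∑ l, e l :=
    le_trans h (Finset.single_le_sum (f := e) (fun _ _ => Nat.zero_le _) (Finset.mem_univ i))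
  omega

lemma sum_step_lt {n N : ℕ} (hN : 2 ≤ N) (e : Fin n → ℕ) (i j : Fin n) (h : N ≤ e i) :
    ∑ l, step N e i j l < ∑ l, e l := by
  have hle : N ≤ ∑ l, e l :=
    le_trans h (Finset.single_le_sum (f := e) (fun _ _ => Nat.zero_le _) (Finset.mem_univ i))
  rw [sum_step e i j h]; omega

noncomputable def red {n : ℕ} (N : ℕ) (hN : 2 ≤ N) (a : Fin n → Fin n → k)
    (e : Fin n → ℕ) : (Fin n → Fin N) → k :=
  if h : ∃ i, N ≤ e i then
    ∑ j, a h.choose j • red N hN a (step N e h.choose j)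
  else
    Pi.single (fun i => ⟨e i, lt_of_not_ge (fun hc => h ⟨i, hc⟩)⟩) 1
  termination_by ∑ l, e l
  decreasing_by exact sum_step_lt hN e h.choose j h.choose_spec

lemma red_of_lt {n N : ℕ} (hN : 2 ≤ N) (a : Fin n → Fin n → k) (e : Fin n → ℕ)
    (h : ∀ i, e i < N) :
    red N hN a e = Pi.single (fun i => ⟨e i, h i⟩) 1 := by
  rw [red, dif_neg (by push_neg; exact h)]

lemma red_step {n N : ℕ} (hN : 2 ≤ N) (a : Fin n → Fin n → k) (e : Fin n → ℕ)
    (i : Fin n) (h : N ≤ e i) :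
    red N hN a e = ∑ j, a i j • red N hN a (step N e i j) := by
  obtain ⟨s, hs⟩ : ∃ s, ∑ l, e l = s := ⟨_, rfl⟩
  induction s using Nat.strong_induction_on generalizing e i with
  | _ s IH =>
  subst hs
  have hex : ∃ i, N ≤ e i := ⟨i, h⟩
  rw [red, dif_pos hex]
  set i₀ := hex.choose with hi₀
  have h₀ : N ≤ e i₀ := hex.choose_spec
  by_cases hii : i₀ = i
  · subst hii; rfl
  · have key : ∀ j, red N hN a (step N e i₀ j)
        = ∑ l, a i l • red N hN a (step N (step N e i₀ j) i l) := by
      intro j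
      refine IH _ (sum_step_lt hN e i₀ j h₀) _ i ?_ rfl
      rw [step_apply]
      simp only [if_neg (Ne.symm hii)]
      split <;> omega
    have key2 : ∀ j, red N hN a (step N e i j)
        = ∑ l, a i₀ l • red N hN a (step N (step N e i j) i₀ l) := by
      intro j
      refine IH _ (sum_step_lt hN e i j h) _ i₀ ?_ rfl
      rw [step_apply]
      simp only [if_neg hii]
      split <;> omega
    have comm : ∀ x y p q : Fin n, x ≠ y → N ≤ e x → N ≤ e y →
        step N (step N e x p) y q = step N (step N e y q) x p := by
      intro x y p q hxy hx hy
      funext m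
      simp only [step_apply]
      by_cases h1 : m = x <;> by_cases h2 : m = y <;> by_cases h3 : m = p <;>
        by_cases h4 : m = q <;> simp_all <;> omega
    calc ∑ j, a i₀ j • red N hN a (step N e i₀ j)
        = ∑ j, ∑ l, (a i₀ j * a i l) • red N hN a (step N (step N e i₀ j) i l) := by
          refine Finset.sum_congr rfl fun j _ => ?_
          rw [key j, Finset.smul_sum]
          exact Finset.sum_congr rfl fun l _ => by rw [smul_smul]
      _ = ∑ l, ∑ j, (a i₀ j * a i l) • red N hN a (step N (step N e i₀ j) i l) :=
          Finset.sum_comm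
      _ = ∑ l, a i l • red N hN a (step N e i l) := by
          refine Finset.sum_congr rfl fun l _ => ?_
          rw [key2 l, Finset.smul_sum]
          refine Finset.sum_congr rfl fun j _ => ?_
          rw [comm i₀ i j l hii h₀ h, smul_smul, mul_comm]

/-- The linear normal-form map. -/
noncomputable def phi {n : ℕ} (N : ℕ) (hN : 2 ≤ N) (a : Fin n → Fin n → k) :
    MvPolynomial (Fin n) k →ₗ[k] ((Fin n → Fin N) → k) :=
  Finsupp.linearCombination k (fun d : Fin n →₀ ℕ => red N hN a ⇑d) ∘ₗ
    (AddMonoidAlgebra.coeffLinearEquiv k).toLinearMap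

lemma phi_monomial {n : ℕ} (N : ℕ) (hN : 2 ≤ N) (a : Fin n → Fin n → k)
    (d : Fin n →₀ ℕ) (c : k) :
    phi N hN a (MvPolynomial.monomial d c) = c • red N hN a ⇑d := by
  have : AddMonoidAlgebra.coeff (MvPolynomial.monomial d c : MvPolynomial (Fin n) k)
      = Finsupp.single d c := rfl
  rw [phi, LinearMap.comp_apply, LinearEquiv.coe_coe, AddMonoidAlgebra.coeffLinearEquiv_apply, this]
  exact Finsupp.linearCombination_single _ _ _

/-- the generating relations -/
noncomputable def rel {n : ℕ} (N : ℕ) (a : Fin n → Fin n → k) (i : Fin n) :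
    MvPolynomial (Fin n) k :=
  MvPolynomial.X i ^ N - ∑ j : Fin n, MvPolynomial.C (a i j) * MvPolynomial.X j

lemma red_coe_step {n N : ℕ} (hN : 2 ≤ N) (a : Fin n → Fin n → k)
    (d : Fin n →₀ ℕ) (i : Fin n) :
    red N hN a ⇑(d + Finsupp.single i N)
      = ∑ j, a i j • red N hN a ((d + Finsupp.single j 1 : Fin n →₀ ℕ) : Fin n → ℕ) := by
  have hi : N ≤ (⇑(d + Finsupp.single i N) : Fin n → ℕ) i := by simp
  rw [red_step hN a _ i hi]
  refine Finset.sum_congr rfl fun j _ => ?_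
  have hst : step N (⇑(d + Finsupp.single i N)) i j
      = ((d + Finsupp.single j 1 : Fin n →₀ ℕ) : Fin n → ℕ) := by
    funext l
    rw [step_apply]
    simp only [Finsupp.coe_add, Pi.add_apply, Finsupp.single_apply]
    simp only [eq_comm]
    split_ifs <;> omega
  rw [hst]

lemma phi_mul_rel {n N : ℕ} (hN : 2 ≤ N) (a : Fin n → Fin n → k)
    (p : MvPolynomial (Fin n) k) (i : Fin n) :
    phi N hN a (p * rel N a i) = 0 := by
  induction p using MvPolynomial.induction_on' with
  | add p q hp hq => rw [add_mul, map_add, hp, hq, add_zero]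
  | monomial d c =>
    rw [rel, mul_sub, Finset.mul_sum, map_sub, map_sum]
    have e1 : (MvPolynomial.monomial d c) * MvPolynomial.X i ^ N
        = MvPolynomial.monomial (d + Finsupp.single i N) c := by
      rw [MvPolynomial.X_pow_eq_monomial, MvPolynomial.monomial_mul, mul_one]
    have e2 : ∀ j, (MvPolynomial.monomial d c) * (MvPolynomial.C (a i j) * MvPolynomial.X j)
        = MvPolynomial.monomial (d + Finsupp.single j 1) (c * a i j) := by
      intro j
      rw [MvPolynomial.C_mul_X_eq_monomial, MvPolynomial.monomial_mul]
    rw [e1, phi_monomial]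
    rw [Finset.sum_congr rfl fun j _ => by rw [e2 j, phi_monomial]]
    rw [red_coe_step hN a d i, Finset.smul_sum, sub_eq_zero]
    exact Finset.sum_congr rfl fun j _ => smul_smul c (a i j) _

lemma phi_ideal {n N : ℕ} (hN : 2 ≤ N) (a : Fin n → Fin n → k)
    {x : MvPolynomial (Fin n) k}
    (hx : x ∈ Ideal.span (Set.range (rel N a))) :
    phi N hN a x = 0 := by
  rw [Ideal.mem_span_range_iff_exists_fun] at hx
  obtain ⟨c, rfl⟩ := hx
  rw [map_sum]
  exact Finset.sum_eq_zero fun i _ => phi_mul_rel hN a (c i) i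

end GQD

namespace GQD
variable {k : Type*} [Field k]

lemma monomial_one_eq_prod {n : ℕ} (d : Fin n →₀ ℕ) :
    (MvPolynomial.monomial d 1 : MvPolynomial (Fin n) k) = ∏ i, MvPolynomial.X i ^ d i := by
  rw [MvPolynomial.monomial_eq, map_one, one_mul]
  exact Finsupp.prod_fintype _ _ (fun i => pow_zero _)

lemma phi_prod {n N : ℕ} (hN : 2 ≤ N) (a : Fin n → Fin n → k) (e : Fin n → ℕ) :
    phi N hN a (∏ i, MvPolynomial.X i ^ e i) = red N hN a e := by
  have hd : ((Finsupp.equivFunOnFinite.symm e : Fin n →₀ ℕ) : Fin n → ℕ) = e := by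
    ext i; simp [Finsupp.equivFunOnFinite]
  rw [show (∏ i, MvPolynomial.X i ^ e i : MvPolynomial (Fin n) k)
      = MvPolynomial.monomial (Finsupp.equivFunOnFinite.symm e) 1 by
    rw [monomial_one_eq_prod]
    exact Finset.prod_congr rfl fun i _ => by rw [hd]]
  rw [phi_monomial, hd, one_smul]

lemma prod_X_pow_mul {n : ℕ} (e1 e2 : Fin n → ℕ) :
    (∏ i, MvPolynomial.X i ^ e1 i : MvPolynomial (Fin n) k) * ∏ i, MvPolynomial.X i ^ e2 i
      = ∏ i, MvPolynomial.X i ^ (e1 i + e2 i) := by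
  rw [← Finset.prod_mul_distrib]
  exact Finset.prod_congr rfl fun i _ => (pow_add _ _ _).symm

end GQD

namespace GQD
variable {k Γ : Type*} [Field k] [AddCommGroup Γ]

lemma wt_step {n N : ℕ} (w : Fin n → Γ) (e : Fin n → ℕ) (i j : Fin n)
    (h : N ≤ e i) (hw : w j = N • w i) :
    ∑ l, step N e i j l • w l = ∑ l, e l • w l := by
  unfold step
  simp only [add_smul]
  rw [Finset.sum_add_distrib]
  have h2 : ∑ l : Fin n, (if l = j then 1 else 0) • w l = w j := by
    rw [Finset.sum_eq_single j]
    · simp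
    · intro b _ hb; simp [hb]
    · simp
  have h1 : ∑ l : Fin n, (if l = i then e l - N else e l) • w l
      = (∑ l, e l • w l) - N • w i := by
    have heq : (fun l : Fin n => (if l = i then e l - N else e l) • w l)
        = Function.update (fun l => e l • w l) i ((e i - N) • w i) := by
      funext l
      by_cases hl : l = i <;> simp [Function.update, hl]
    rw [heq, Finset.sum_update_of_mem (Finset.mem_univ i)]
    rw [Finset.sum_eq_add_sum_sdiff_singleton_of_mem (Finset.mem_univ i) (fun l => e l • w l)]
    rw [sub_nsmul _ h]
    abel
  rw [h1, h2, hw]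
  abel

lemma mk_smul {n : ℕ} (I : Ideal (MvPolynomial (Fin n) k)) (c : k)
    (p : MvPolynomial (Fin n) k) :
    Ideal.Quotient.mk I (c • p) = c • Ideal.Quotient.mk I p := by
  rw [← Ideal.Quotient.mkₐ_eq_mk k I]
  exact map_smul (Ideal.Quotient.mkₐ k I) c p

lemma mk_C_mul {n : ℕ} (I : Ideal (MvPolynomial (Fin n) k)) (c : k)
    (p : MvPolynomial (Fin n) k) :
    Ideal.Quotient.mk I (MvPolynomial.C c * p) = c • Ideal.Quotient.mk I p := by
  rw [← MvPolynomial.smul_eq_C_mul, mk_smul]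

end GQD

namespace GQD
variable {k Γ : Type*} [Field k] [AddCommGroup Γ]

lemma mk_prod_mem_span {n N : ℕ} (hN : 2 ≤ N) (w : Fin n → Γ) (a : Fin n → Fin n → k)
    (ha : ∀ i j, w j ≠ N • w i → a i j = 0)
    (I : Ideal (MvPolynomial (Fin n) k))
    (hI : I = Ideal.span (Set.range (rel N a)))
    (e : Fin n → ℕ) :
    Ideal.Quotient.mk I (∏ i, MvPolynomial.X i ^ e i) ∈
      Submodule.span k ((fun f : Fin n → Fin N =>
          Ideal.Quotient.mk I (∏ i, MvPolynomial.X i ^ (f i : ℕ))) ''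
        {f | ∑ i, (f i : ℕ) • w i = ∑ i, e i • w i}) := by
  obtain ⟨s, hs⟩ : ∃ s, ∑ l, e l = s := ⟨_, rfl⟩
  induction s using Nat.strong_induction_on generalizing e with
  | _ s IH =>
  subst hs
  by_cases h : ∀ i, e i < N
  · refine Submodule.subset_span ⟨fun i => ⟨e i, h i⟩, by simp, rfl⟩
  · push_neg at h
    obtain ⟨i, hi⟩ := h
    set e' : Fin n → ℕ := fun l => if l = i then e l - N else e l with he'
    set D : MvPolynomial (Fin n) k := ∏ l, MvPolynomial.X l ^ e' l with hD
    have claim1 : D * MvPolynomial.X i ^ N = ∏ l, MvPolynomial.X l ^ e l := by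
      have : (MvPolynomial.X i ^ N : MvPolynomial (Fin n) k)
          = ∏ l, MvPolynomial.X l ^ (if l = i then N else 0) := by
        rw [Finset.prod_eq_single i (fun b _ hb => by simp [hb]) (by simp)]
        simp
      rw [this, hD, prod_X_pow_mul]
      refine Finset.prod_congr rfl fun l _ => ?_
      congr 1
      by_cases hl : l = i <;> simp [he', hl] <;> omega
    have claim2 : ∀ j, D * MvPolynomial.X j = ∏ l, MvPolynomial.X l ^ (step N e i j l) := by
      intro j
      have : (MvPolynomial.X j : MvPolynomial (Fin n) k)
          = ∏ l, MvPolynomial.X l ^ (if l = j then 1 else 0) := by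
        rw [Finset.prod_eq_single j (fun b _ hb => by simp [hb]) (by simp)]
        simp
      rw [this, hD, prod_X_pow_mul]
      rfl
    have hmem : D * rel N a i ∈ I := by
      rw [hI]
      exact Ideal.mul_mem_left _ _ (Ideal.subset_span ⟨i, rfl⟩)
    have hkey : (Ideal.Quotient.mk I) (∏ l, MvPolynomial.X l ^ e l)
        = ∑ j, a i j • (Ideal.Quotient.mk I) (∏ l, MvPolynomial.X l ^ (step N e i j) l) := by
      have hdiff : (∏ l, MvPolynomial.X l ^ e l)
          - ∑ j, MvPolynomial.C (a i j) * ∏ l, MvPolynomial.X l ^ (step N e i j) l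
          = D * rel N a i := by
        rw [rel, mul_sub, claim1, Finset.mul_sum]
        congr 1
        refine Finset.sum_congr rfl fun j _ => ?_
        rw [← mul_assoc, mul_comm D (MvPolynomial.C (a i j)), mul_assoc, claim2 j]
      have : Ideal.Quotient.mk I ((∏ l, MvPolynomial.X l ^ e l)
          - ∑ j, MvPolynomial.C (a i j) * ∏ l, MvPolynomial.X l ^ (step N e i j) l) = 0 := by
        rw [hdiff, Ideal.Quotient.eq_zero_iff_mem]
        exact hmem
      rw [map_sub, sub_eq_zero] at this
      rw [this, map_sum]
      exact Finset.sum_congr rfl fun j _ => mk_C_mul I _ _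
    rw [hkey]
    refine Submodule.sum_mem _ fun j _ => ?_
    by_cases haij : a i j = 0
    · rw [haij, zero_smul]; exact Submodule.zero_mem _
    · have hw : w j = N • w i := by_contra fun hc => haij (ha i j hc)
      refine Submodule.smul_mem _ _ ?_
      have := IH _ (sum_step_lt hN e i j hi) (step N e i j) rfl
      rwa [wt_step w e i j hi hw] at this

end GQD

namespace GQD
variable {k Γ : Type*} [Field k] [AddCommGroup Γ]

lemma lin_indep {n N : ℕ} (hN : 2 ≤ N) (a : Fin n → Fin n → k)
    (I : Ideal (MvPolynomial (Fin n) k))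
    (hI : I = Ideal.span (Set.range (rel N a))) :
    LinearIndependent k (fun f : Fin n → Fin N =>
      Ideal.Quotient.mk I (∏ i, MvPolynomial.X i ^ (f i : ℕ))) := by
  rw [Fintype.linearIndependent_iff]
  intro c hc f₀
  set P : MvPolynomial (Fin n) k
    := ∑ f : Fin n → Fin N, c f • ∏ i, MvPolynomial.X i ^ (f i : ℕ) with hP
  have hPI : P ∈ I := by
    rw [← Ideal.Quotient.eq_zero_iff_mem, hP, map_sum, ← hc]
    exact Finset.sum_congr rfl fun f _ => mk_smul I _ _
  have h0 : phi N hN a P = 0 := phi_ideal hN a (hI ▸ hPI)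
  have hred : ∀ f : Fin n → Fin N,
      red N hN a (fun i => (f i : ℕ)) = Pi.single f (1 : k) := by
    intro f
    rw [red_of_lt hN a _ (fun i => (f i).isLt)]
  have : phi N hN a P = ∑ f : Fin n → Fin N, c f • (Pi.single f 1 : (Fin n → Fin N) → k) := by
    rw [hP, map_sum]
    exact Finset.sum_congr rfl fun f _ => by rw [map_smul, phi_prod, hred f]
  rw [this] at h0
  have := congrFun h0 f₀
  simpa [Pi.single_apply, Finset.sum_ite_eq] using this

end GQD


/-- Graded refinement of the monomial-basis computation: for a field `k`, weights
`w : Fin n → Γ` and coefficients `a i j` vanishing unless `w j = N • w i`, the quotient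
`Q = k[X_1,…,X_n]/(X_i^N - Σ_j a i j • X_j)` decomposes as the internal direct sum of the
spans `Q_γ` of monomials of weight `γ`, and `dim_k Q_γ` is the number of
`e : Fin n → {0, …, N-1}` with `Σ_i e i • w i = γ`. -/
theorem graded_quotient_dimension_and_decomposition
    {k Γ : Type*} [Field k] [AddCommGroup Γ]
    (n N : ℕ) (hN : 2 ≤ N) (w : Fin n → Γ) (a : Fin n → Fin n → k)
    (ha : ∀ i j, w j ≠ N • w i → a i j = 0)
    (I : Ideal (MvPolynomial (Fin n) k))
    (hI : I = Ideal.span (Set.range fun i : Fin n =>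
        MvPolynomial.X i ^ N - ∑ j : Fin n, MvPolynomial.C (a i j) * MvPolynomial.X j))
    (Qgr : Γ → Submodule k (MvPolynomial (Fin n) k ⧸ I))
    (hQgr : ∀ γ : Γ, Qgr γ = Submodule.span k
        {q | ∃ e : Fin n → ℕ, (∑ i : Fin n, e i • w i) = γ ∧
          q = Ideal.Quotient.mk I (∏ i : Fin n, MvPolynomial.X i ^ e i)}) :
    (∀ γ : Γ, Module.finrank k (Qgr γ) =
        Nat.card {e : Fin n → Fin N // (∑ i : Fin n, (e i : ℕ) • w i) = γ}) ∧
      DirectSum.IsInternal Qgr := by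
  have hI' : I = Ideal.span (Set.range (GQD.rel N a)) := hI
  set B : (Fin n → Fin N) → (MvPolynomial (Fin n) k ⧸ I) :=
    fun f => Ideal.Quotient.mk I (∏ i, MvPolynomial.X i ^ (f i : ℕ)) with hB
  have ind : LinearIndependent k B := GQD.lin_indep hN a I hI'
  have hspan : ∀ γ, Qgr γ
      = Submodule.span k (B '' {f | ∑ i, (f i : ℕ) • w i = γ}) := by
    intro γ
    rw [hQgr γ]
    apply le_antisymm
    · rw [Submodule.span_le]
      rintro q ⟨e, hwe, rfl⟩
      have := GQD.mk_prod_mem_span hN w a ha I hI' e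
      rw [hwe] at this
      exact this
    · rw [Submodule.span_le]
      rintro q ⟨f, hf, rfl⟩
      exact Submodule.subset_span ⟨fun i => (f i : ℕ), hf, rfl⟩
  have hsup : ⨆ γ, Qgr γ = ⊤ := by
    rw [eq_top_iff]
    intro x _
    obtain ⟨p, rfl⟩ := Ideal.Quotient.mk_surjective x
    rw [MvPolynomial.as_sum p, map_sum]
    refine Submodule.sum_mem _ fun d _ => ?_
    have hm : (MvPolynomial.monomial d) (MvPolynomial.coeff d p)
        = MvPolynomial.coeff d p • ∏ i, MvPolynomial.X i ^ d i := by
      rw [← GQD.monomial_one_eq_prod, MvPolynomial.smul_monomial, smul_eq_mul, mul_one]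
    rw [hm, GQD.mk_smul]
    refine Submodule.smul_mem _ _ ?_
    refine Submodule.mem_iSup_of_mem (∑ i, d i • w i) ?_
    rw [hQgr]
    exact Submodule.subset_span ⟨⇑d, rfl, rfl⟩
  constructor
  · intro γ
    have heq : B '' {f | ∑ i, (f i : ℕ) • w i = γ}
        = Set.range (fun f : {f : Fin n → Fin N // ∑ i, (f i : ℕ) • w i = γ} => B f.1) :=
      Set.image_eq_range _ _
    have hcomp : LinearIndependent k
        (fun f : {f : Fin n → Fin N // ∑ i, (f i : ℕ) • w i = γ} => B f.1) :=
      ind.comp Subtype.val Subtype.val_injective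
    rw [hspan γ, heq, finrank_span_eq_card hcomp, Nat.card_eq_fintype_card]
  · rw [DirectSum.isInternal_submodule_iff_iSupIndep_and_iSup_eq_top]
    refine ⟨iSupIndep_def.mpr fun γ => ?_, hsup⟩
    have h1 : Qgr γ ≤ Submodule.span k (B '' {f | ∑ i, (f i : ℕ) • w i = γ}) :=
      (hspan γ).le
    have h2 : (⨆ γ', ⨆ _ : γ' ≠ γ, Qgr γ')
        ≤ Submodule.span k (B '' {f | ∑ i, (f i : ℕ) • w i ≠ γ}) := by
      refine iSup₂_le fun γ' hne => ?_
      rw [hspan γ']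
      refine Submodule.span_mono (Set.image_mono ?_)
      intro f hf
      simp only [Set.mem_setOf_eq] at hf ⊢
      rw [hf]
      exact hne
    exact Disjoint.mono h1 h2
      (ind.disjoint_span_image (Set.disjoint_left.mpr fun f hf hnf => hnf hf))
end
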